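/- arXiv:2103.14144 — 2 statements merged into one kernel-verified Lean document; each statement's English description precedes it below -/
import Mathlib

section
/- Let ā > 0 and let f : [0, ∞) → [0, ∞) satisfy: (i) f is L-Lipschitz on [0, ∞); (ii) f is strictly concave on [0, ā]; (iii) f(x) = 0 for all x ≥ ā. Let 0 < α ≤ 1/(L + 1) and define g(x) = α·f(x) + (1 − α)·x. Then for every x₀ > 0, the sequence of iterates x₀, g(x₀), g(g(x₀)), … converges to a fixed point of f, i.e. to a point z with f(z) = z. -/
/-!
Since `α (L + 1) ≤ 1`, the Lipschitz bound on `f` cannot outweigh the identity part of `g`, so `g`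
is monotone on `[0, ∞)`. As `g 0 = α f 0 ≥ 0` and `g M = (1 - α) M ≤ M` for `M = max x₀ ā`, the
map `g` sends `[0, M]` into itself. The orbit of a monotone self-map of a bounded interval is
monotone, hence converges; by continuity its limit is a fixed point of `g`, and the fixed points of
`g` are exactly those of `f`.
-/

open Set Filter Function Topology

section IterateMonotoneOn

variable {α : Type*} {f : α → α} {s : Set α} {x : α}

theorem MonotoneOn.monotone_iterate_of_le_map [Preorder α] (hf : MonotoneOn f s)
    (hs : MapsTo f s s) (hx : x ∈ s) (hfx : x ≤ f x) : Monotone fun n => f^[n] x := by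
  refine monotone_nat_of_le_succ fun n => ?_
  induction n with
  | zero => exact hfx
  | succ n ih =>
    rw [iterate_succ_apply' f n, iterate_succ_apply' f (n + 1)]
    exact hf (hs.iterate n hx) (hs.iterate (n + 1) hx) ih

theorem MonotoneOn.antitone_iterate_of_map_le [Preorder α] (hf : MonotoneOn f s)
    (hs : MapsTo f s s) (hx : x ∈ s) (hfx : f x ≤ x) : Antitone fun n => f^[n] x := by
  refine antitone_nat_of_succ_le fun n => ?_
  induction n with
  | zero => exact hfx
  | succ n ih =>
    rw [iterate_succ_apply' f n, iterate_succ_apply' f (n + 1)]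
    exact hf (hs.iterate (n + 1) hx) (hs.iterate n hx) ih

theorem MonotoneOn.exists_tendsto_iterate [ConditionallyCompleteLinearOrder α]
    [TopologicalSpace α] [OrderTopology α] (hf : MonotoneOn f s) (hs : MapsTo f s s)
    (hbdd_below : BddBelow s) (hbdd_above : BddAbove s) (hx : x ∈ s) :
    ∃ z, Tendsto (fun n => f^[n] x) atTop (𝓝 z) := by
  have horbit : range (fun n => f^[n] x) ⊆ s := range_subset_iff.2 fun n => hs.iterate n hx
  rcases le_total x (f x) with hfx | hfx
  · exact ⟨_, tendsto_atTop_ciSup (hf.monotone_iterate_of_le_map hs hx hfx)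
      (hbdd_above.mono horbit)⟩
  · exact ⟨_, tendsto_atTop_ciInf (hf.antitone_iterate_of_map_le hs hx hfx)
      (hbdd_below.mono horbit)⟩

theorem isFixedPt_of_tendsto_iterate_of_continuousOn [TopologicalSpace α] [T2Space α] {y : α}
    (hy : Tendsto (fun n => f^[n] x) atTop (𝓝 y)) (hf : ContinuousOn f s) (hs : MapsTo f s s)
    (hsc : IsClosed s) (hx : x ∈ s) : IsFixedPt f y := by
  have horbit : ∀ᶠ n in atTop, f^[n] x ∈ s := Eventually.of_forall fun n => hs.iterate n hx
  have hys : y ∈ s := hsc.mem_of_tendsto hy horbit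
  refine tendsto_nhds_unique ((tendsto_add_atTop_iff_nat 1).1 ?_) hy
  simp only [iterate_succ' f]
  exact (hf y hys).tendsto.comp (tendsto_nhdsWithin_iff.2 ⟨hy, horbit⟩)

theorem MonotoneOn.exists_isFixedPt_tendsto_iterate [ConditionallyCompleteLinearOrder α]
    [TopologicalSpace α] [OrderTopology α] (hf : MonotoneOn f s) (hfc : ContinuousOn f s)
    (hs : MapsTo f s s) (hsc : IsClosed s) (hbdd_below : BddBelow s) (hbdd_above : BddAbove s)
    (hx : x ∈ s) : ∃ z, IsFixedPt f z ∧ Tendsto (fun n => f^[n] x) atTop (𝓝 z) := by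
  obtain ⟨z, hz⟩ := hf.exists_tendsto_iterate hs hbdd_below hbdd_above hx
  exact ⟨z, isFixedPt_of_tendsto_iterate_of_continuousOn hz hfc hs hsc hx, hz⟩

end IterateMonotoneOn

theorem monotoneOn_relaxation {f : ℝ → ℝ} {s : Set ℝ} {L α : ℝ}
    (hlip : ∀ x ∈ s, ∀ y ∈ s, |f x - f y| ≤ L * |x - y|) (hα : 0 ≤ α) (hαL : α * (L + 1) ≤ 1) :
    MonotoneOn (fun x => α * f x + (1 - α) * x) s := by
  intro a ha b hb hab
  have hf : f a - f b ≤ L * (b - a) := by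
    have h := hlip a ha b hb
    rw [abs_of_nonpos (sub_nonpos.2 hab)] at h
    linarith [le_abs_self (f a - f b)]
  nlinarith [mul_le_mul_of_nonneg_left hf hα, mul_nonneg (sub_nonneg.2 hαL) (sub_nonneg.2 hab)]

theorem reduction_iteration_converges_general
    (abar : ℝ) (f : ℝ → ℝ)
    (hnn : ∀ x, 0 ≤ x → 0 ≤ f x)
    (L : ℝ)
    (hlip : ∀ x ∈ Set.Ici (0 : ℝ), ∀ y ∈ Set.Ici (0 : ℝ), |f x - f y| ≤ L * |x - y|)
    (hzero : ∀ x, abar ≤ x → f x = 0)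
    (α : ℝ) (hα0 : 0 < α) (hα1 : α ≤ 1 / (L + 1))
    (g : ℝ → ℝ) (hg : ∀ x, g x = α * f x + (1 - α) * x)
    (x₀ : ℝ) (hx₀ : 0 < x₀) :
    ∃ z, f z = z ∧ Tendsto (fun k => g^[k] x₀) atTop (nhds z) := by
  have hαL : α * (L + 1) ≤ 1 :=
    (le_div_iff₀ (one_div_pos.mp (hα0.trans_le hα1))).mp hα1
  obtain rfl : g = fun x => α * f x + (1 - α) * x := funext hg
  set M := max x₀ abar
  have hlipM : ∀ x ∈ Icc 0 M, ∀ y ∈ Icc 0 M, |f x - f y| ≤ L * |x - y| :=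
    fun x hx y hy => hlip x hx.1 y hy.1
  have hmono := monotoneOn_relaxation hlipM hα0.le hαL
  have hcont : ContinuousOn f (Icc 0 M) :=
    (LipschitzOnWith.of_dist_le' (by simpa only [Real.dist_eq] using hlipM)).continuousOn
  have hmaps : MapsTo (fun x => α * f x + (1 - α) * x) (Icc 0 M) (Icc 0 M) := by
    refine hmono.mapsTo_Icc.mono_right (Icc_subset_Icc ?_ ?_)
    · nlinarith [hnn 0 le_rfl]
    · nlinarith [hzero M (le_max_right _ _), hx₀.trans_le (le_max_left x₀ abar)]
  obtain ⟨z, hfix, hz⟩ := hmono.exists_isFixedPt_tendsto_iterate (by fun_prop) hmaps isClosed_Icc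
    bddBelow_Icc bddAbove_Icc ⟨hx₀.le, le_max_left _ _⟩
  refine ⟨z, mul_left_cancel₀ hα0.ne' ?_, hz⟩
  linarith [hfix.eq]

/-- Lemma (reduction): if `f : [0,∞) → [0,∞)` is `L`-Lipschitz, strictly concave on
`[0, abar]`, and vanishes on `[abar, ∞)`, then for `0 < α ≤ 1/(L+1)` the fixed-point
iteration of `g(x) = α·f(x) + (1-α)·x` starting from any positive `x₀` converges to a
fixed point of `f`. -/
theorem reduction_iteration_converges
    (abar : ℝ) (habar : 0 < abar) (f : ℝ → ℝ)
    (hnn : ∀ x, 0 ≤ x → 0 ≤ f x)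
    (L : ℝ) (hL : 0 ≤ L)
    (hlip : ∀ x ∈ Set.Ici (0 : ℝ), ∀ y ∈ Set.Ici (0 : ℝ), |f x - f y| ≤ L * |x - y|)
    (hconc : StrictConcaveOn ℝ (Set.Icc 0 abar) f)
    (hzero : ∀ x, abar ≤ x → f x = 0)
    (α : ℝ) (hα0 : 0 < α) (hα1 : α ≤ 1 / (L + 1))
    (g : ℝ → ℝ) (hg : ∀ x, g x = α * f x + (1 - α) * x)
    (x₀ : ℝ) (hx₀ : 0 < x₀) :
    ∃ z, f z = z ∧ Tendsto (fun k => g^[k] x₀) atTop (nhds z) :=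
  reduction_iteration_converges_general abar f hnn L hlip hzero α hα0 hα1 g hg x₀ hx₀
end

section
/- Assume the bidder values are μ-almost surely nonnegative and integrable. If q ≥ 0 satisfies W(q) = m·q, then W(q) ≥ OPT/2. -/
open MeasureTheory Filter

/-- Number of bidders with value at least `q`. -/
noncomputable def demandCount (n : ℕ) (q : ℝ) (v : Fin n → ℝ) : ℕ :=
  (Finset.univ.filter fun i => q ≤ v i).card

/-- Welfare of the maximum-value allocation at price `q` for value profile `v`:
the largest sum `Σ_{i∈S} vᵢ·1{vᵢ ≥ q}` over subsets `S` of size at most `m`. -/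
noncomputable def maxWelfare (n m : ℕ) (q : ℝ) (v : Fin n → ℝ) : ℝ :=
  ((Finset.univ : Finset (Fin n)).powerset.filter fun S => S.card ≤ m).sup'
    ⟨∅, by simp⟩ fun S => ∑ i ∈ S, if q ≤ v i then v i else 0

/-- Welfare curve: expected welfare of the maximum-value allocation at price `q`. -/
noncomputable def W (n m : ℕ) (μ : Measure ℝ) (q : ℝ) : ℝ :=
  ∫ v, maxWelfare n m q v ∂(Measure.pi fun _ : Fin n => μ)

/-! Raising the price from `p` to `q ≥ 0` costs each winning bidder at most `q`: a bidder still
served keeps its value, and a bidder priced out had value below `q`. Summing over the at most `m`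
winners gives `W p ≤ W q + m q`, which at an equilibrium price `q` (and `p = 0`) reads
`OPT ≤ 2 W q`. -/

section maxWelfare

variable {n m : ℕ}

lemma sum_le_maxWelfare (q : ℝ) (v : Fin n → ℝ) {S : Finset (Fin n)} (hS : S.card ≤ m) :
    ∑ i ∈ S, (if q ≤ v i then v i else 0) ≤ maxWelfare n m q v :=
  Finset.le_sup' (fun S => ∑ i ∈ S, if q ≤ v i then v i else 0) (by simpa using hS)

lemma maxWelfare_nonneg (q : ℝ) (v : Fin n → ℝ) : 0 ≤ maxWelfare n m q v := by
  simpa using sum_le_maxWelfare (m := m) q v (S := ∅) (by simp)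

lemma maxWelfare_le_sum_abs (q : ℝ) (v : Fin n → ℝ) : maxWelfare n m q v ≤ ∑ i, |v i| := by
  refine Finset.sup'_le _ _ fun S _ => ?_
  calc ∑ i ∈ S, (if q ≤ v i then v i else 0) ≤ ∑ i ∈ S, |v i| :=
        Finset.sum_le_sum fun i _ => by split <;> simp [le_abs_self]
    _ ≤ ∑ i, |v i| :=
        Finset.sum_le_sum_of_subset_of_nonneg S.subset_univ fun i _ _ => abs_nonneg _

lemma measurable_maxWelfare (q : ℝ) : Measurable (maxWelfare n m q) := by
  let g : Finset (Fin n) → (Fin n → ℝ) → ℝ := fun S v => ∑ i ∈ S, if q ≤ v i then v i else 0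
  have hsup : maxWelfare n m q =
      ((Finset.univ : Finset (Fin n)).powerset.filter fun S => S.card ≤ m).sup' ⟨∅, by simp⟩ g :=
    funext fun v => (Finset.sup'_apply (C := fun _ => ℝ) _ g v).symm
  rw [hsup]
  exact Finset.measurable_sup' _ fun S _ => Finset.measurable_sum S fun i _ =>
    Measurable.ite (measurableSet_le measurable_const (measurable_pi_apply i))
      (measurable_pi_apply i) measurable_const

lemma integrable_maxWelfare {ν : Measure (Fin n → ℝ)}
    (hint : ∀ i, Integrable (fun v => v i) ν) (q : ℝ) :
    Integrable (maxWelfare n m q) ν := by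
  refine (integrable_finsetSum Finset.univ fun i _ => (hint i).abs).mono
    (measurable_maxWelfare q).aestronglyMeasurable (Eventually.of_forall fun v => ?_)
  rw [Real.norm_of_nonneg (maxWelfare_nonneg q v),
    Real.norm_of_nonneg (Finset.sum_nonneg fun i _ => abs_nonneg _)]
  exact maxWelfare_le_sum_abs q v

lemma ite_le_ite_add {p q x : ℝ} (hq : 0 ≤ q) :
    (if p ≤ x then x else 0) ≤ (if q ≤ x then x else 0) + q := by
  split_ifs <;> linarith

lemma maxWelfare_le_maxWelfare_add (p : ℝ) {q : ℝ} (hq : 0 ≤ q) (v : Fin n → ℝ) :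
    maxWelfare n m p v ≤ maxWelfare n m q v + m * q := by
  refine Finset.sup'_le _ _ fun S hS => ?_
  have hcard : S.card ≤ m := (Finset.mem_filter.mp hS).2
  calc ∑ i ∈ S, (if p ≤ v i then v i else 0)
      ≤ ∑ i ∈ S, ((if q ≤ v i then v i else 0) + q) :=
        Finset.sum_le_sum fun i _ => ite_le_ite_add hq
    _ = ∑ i ∈ S, (if q ≤ v i then v i else 0) + S.card * q := by
        rw [Finset.sum_add_distrib, Finset.sum_const, nsmul_eq_mul]
    _ ≤ maxWelfare n m q v + m * q :=
        add_le_add (sum_le_maxWelfare q v hcard)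
          (mul_le_mul_of_nonneg_right (by exact_mod_cast hcard) hq)

end maxWelfare

lemma W_le_W_add (n m : ℕ) {μ : Measure ℝ} [IsProbabilityMeasure μ]
    (hint : Integrable (id : ℝ → ℝ) μ) (p : ℝ) {q : ℝ} (hq : 0 ≤ q) :
    W n m μ p ≤ W n m μ q + m * q := by
  have hcoord : ∀ i, Integrable (fun v : Fin n → ℝ => v i) (Measure.pi fun _ => μ) :=
    fun _ => integrable_eval hint
  calc W n m μ p
      ≤ ∫ v, (maxWelfare n m q v + m * q) ∂(Measure.pi fun _ : Fin n => μ) :=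
        integral_mono (integrable_maxWelfare hcoord p)
          ((integrable_maxWelfare hcoord q).add (integrable_const _))
          (maxWelfare_le_maxWelfare_add p hq)
    _ = W n m μ q + m * q := by
        rw [integral_add (integrable_maxWelfare hcoord q) (integrable_const _), integral_const]
        simp [W]

theorem wdpp_equilibrium_welfare_general
    (n m : ℕ) (μ : Measure ℝ) [IsProbabilityMeasure μ]
    (hint : Integrable (id : ℝ → ℝ) μ)
    (q : ℝ) (hq : 0 ≤ q) (heq : W n m μ q = m * q) :
    W n m μ 0 / 2 ≤ W n m μ q := by
  have h := W_le_W_add n m hint 0 hq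
  rw [← heq] at h
  linarith

/-- If `q ≥ 0` is an equilibrium price of the WDPP mechanism, i.e. `W(q) = m·q`, then
the welfare at `q` is at least half the optimal welfare `OPT = W(0)`. -/
theorem wdpp_equilibrium_welfare
    (n m : ℕ) (hm : 1 ≤ m) (μ : Measure ℝ) [IsProbabilityMeasure μ]
    (hpos : ∀ᵐ x ∂μ, 0 ≤ x) (hint : Integrable (id : ℝ → ℝ) μ)
    (q : ℝ) (hq : 0 ≤ q) (heq : W n m μ q = m * q) :
    W n m μ 0 / 2 ≤ W n m μ q :=
  wdpp_equilibrium_welfare_general n m μ hint q hq heq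
end
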